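/- Let m, N_t ≥ 1 and α ∈ (0,1). Let P ∈ ℂ^{m×m} be invertible and A = P^{-1} D_A P with D_A = diag(λ_1,…,λ_m). Let r_1,…,r_m ∈ ℂ be the stability values of a one-step time integrator at the eigenvalues (r_i = 𝓡(Δt λ_i)), and assume the stability condition |r_i| ≤ 1 for all i. Set R_A := P^{-1} diag(r_1,…,r_m) P, let 𝐀 = I_{N_t} ⊗ I_m + S ⊗ R_A be the all-at-once matrix of the one-step scheme U_{n+1} + R_A U_n = F̃_n, and let P_α = I_{N_t} ⊗ I_m + S_α ⊗ R_A be its α-circulant approximation. Then P_α is invertible and for every vector e ∈ ℂ^{N_t·m}: ‖(I_{N_t} ⊗ P)(I − P_α^{-1}𝐀)e‖_∞ ≤ (α/(1−α))·‖(I_{N_t} ⊗ P)e‖_∞. Consequently, the errors err^k = u^k − u of the stationary iteration P_α u^{k+1} = (P_α − 𝐀)u^k + b satisfy ‖(I_{N_t} ⊗ P) err^{k+1}‖_∞ ≤ (α/(1−α))·‖(I_{N_t} ⊗ P) err^k‖_∞ for all k, so the iteration converges linearly whenever α ∈ (0,1/2). -/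

import Mathlib

/-!
Conjugating by `I ⊗ P` turns `R_A` into `diag r`, and `P_α - 𝐀 = α E_{1,N} ⊗ R_A`. Hence, with
`w = (I ⊗ P) e`, the vector `v = (I ⊗ P)(I - P_α⁻¹ 𝐀) e` solves
`(I + r_i S_α) v_i = α r_i w_{N,i} e_1` column by column: the recurrence `v_{k+1} = -r_i v_k`,
closed by the wrap-around equation `v_1 + α r_i v_N = α r_i w_{N,i}`. So `v_k = (-r_i)^{k-1} v_1`
and `(1 - α (-r_i)^N) v_1 = α r_i w_{N,i}`, and `|r_i| ≤ 1` gives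
`|v_k| ≤ |v_1| ≤ α |w_{N,i}| / (1 - α)`. The same bound with `w = 0` shows that `P_α` is
injective, hence invertible.
-/

open Matrix
open scoped Kronecker

/-- The down-shift matrix `S` (entries `S_{j+1,j} = 1`, 0-based: `S j k = 1` iff `j = k+1`). -/
noncomputable def downShift (N : ℕ) : Matrix (Fin N) (Fin N) ℂ :=
  Matrix.of fun j k : Fin N => if (j : ℕ) = (k : ℕ) + 1 then (1 : ℂ) else 0

/-- The α-shift matrix `S_α = S + α E_{1,N}`, where `E_{1,N}` has a single `1` in the
top-right corner. -/
noncomputable def downShiftAlpha (N : ℕ) (α : ℂ) : Matrix (Fin N) (Fin N) ℂ :=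
  downShift N +
    α • Matrix.of fun j k : Fin N => if (j : ℕ) = 0 ∧ (k : ℕ) + 1 = N then (1 : ℂ) else 0

section Shift

variable {N : ℕ}

@[simp]
lemma downShift_mulVec_zero (v : Fin (N + 1) → ℂ) : (downShift (N + 1) *ᵥ v) 0 = 0 := by
  simp [downShift, mulVec, dotProduct]

@[simp]
lemma downShift_mulVec_succ (v : Fin (N + 1) → ℂ) (k : Fin N) :
    (downShift (N + 1) *ᵥ v) k.succ = v k.castSucc := by
  rw [mulVec, dotProduct, Finset.sum_eq_single k.castSucc]
  · simp [downShift]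
  · intro j _ hj
    simp only [downShift, of_apply, Fin.val_succ, add_left_inj, ite_mul, one_mul, zero_mul]
    exact if_neg fun h => hj (Fin.ext h.symm)
  · simp

lemma downShiftAlpha_mulVec (α : ℂ) (v : Fin (N + 1) → ℂ) :
    downShiftAlpha (N + 1) α *ᵥ v =
      downShift (N + 1) *ᵥ v + Pi.single 0 (α * v (Fin.last N)) := by
  have hcorner : (of fun j k : Fin (N + 1) =>
      if (j : ℕ) = 0 ∧ (k : ℕ) + 1 = N + 1 then (1 : ℂ) else 0) *ᵥ v =
      Pi.single 0 (v (Fin.last N)) := by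
    ext j
    rw [mulVec, dotProduct, Finset.sum_eq_single (Fin.last N)]
    · by_cases hj : j = 0 <;> simp [hj, Fin.val_eq_zero_iff]
    · intro k _ hk
      simp only [of_apply, add_left_inj, ite_mul, one_mul, zero_mul]
      exact if_neg fun h => hk (Fin.ext h.2)
    · simp
  rw [downShiftAlpha, add_mulVec, smul_mulVec, hcorner, ← Pi.single_smul, smul_eq_mul]

end Shift

section Recurrence

variable {N : ℕ} {r α y : ℂ} {v : Fin (N + 1) → ℂ}

lemma apply_eq_neg_pow_mul_of_add_smul_downShiftAlpha_mulVec
    (h : v + r • (downShiftAlpha (N + 1) α *ᵥ v) = Pi.single 0 y) (k : Fin (N + 1)) :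
    v k = (-r) ^ (k : ℕ) * v 0 := by
  induction k using Fin.induction with
  | zero => simp
  | succ k ih =>
    have hk := congrFun h k.succ
    simp only [downShiftAlpha_mulVec, Pi.add_apply, Pi.smul_apply, downShift_mulVec_succ,
      Pi.single_apply, Fin.succ_ne_zero, if_false, add_zero, smul_eq_mul] at hk
    rw [Fin.val_succ, pow_succ, ← Fin.val_castSucc, mul_right_comm, ← ih]
    linear_combination hk

lemma one_sub_mul_neg_pow_mul_eq_of_add_smul_downShiftAlpha_mulVec
    (h : v + r • (downShiftAlpha (N + 1) α *ᵥ v) = Pi.single 0 y) :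
    (1 - α * (-r) ^ (N + 1)) * v 0 = y := by
  have h0 := congrFun h 0
  simp only [downShiftAlpha_mulVec, Pi.add_apply, Pi.smul_apply, downShift_mulVec_zero,
    Pi.single_eq_same, zero_add, smul_eq_mul] at h0
  rw [apply_eq_neg_pow_mul_of_add_smul_downShiftAlpha_mulVec h (Fin.last N), Fin.val_last] at h0
  linear_combination h0

lemma norm_le_of_add_smul_downShiftAlpha_mulVec (hr : ‖r‖ ≤ 1) (hα : ‖α‖ < 1)
    (h : v + r • (downShiftAlpha (N + 1) α *ᵥ v) = Pi.single 0 y) (k : Fin (N + 1)) :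
    ‖v k‖ ≤ ‖y‖ / (1 - ‖α‖) := by
  have hpow : ∀ n : ℕ, ‖(-r) ^ n‖ ≤ 1 := fun n => by
    rw [norm_pow, norm_neg]; exact pow_le_one₀ (norm_nonneg r) hr
  have hdenom : 1 - ‖α‖ ≤ ‖1 - α * (-r) ^ (N + 1)‖ := by
    calc 1 - ‖α‖ ≤ 1 - ‖α * (-r) ^ (N + 1)‖ := by
          rw [norm_mul]; gcongr; exact mul_le_of_le_one_right (norm_nonneg α) (hpow _)
      _ ≤ ‖1 - α * (-r) ^ (N + 1)‖ := by simpa using norm_sub_norm_le (1 : ℂ) (α * (-r) ^ (N + 1))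
  have hv0 : ‖v 0‖ * (1 - ‖α‖) ≤ ‖y‖ := by
    rw [← one_sub_mul_neg_pow_mul_eq_of_add_smul_downShiftAlpha_mulVec h, norm_mul, mul_comm]
    gcongr
  calc ‖v k‖ ≤ ‖v 0‖ := by
        rw [apply_eq_neg_pow_mul_of_add_smul_downShiftAlpha_mulVec h k, norm_mul]
        exact mul_le_of_le_one_left (norm_nonneg _) (hpow _)
    _ ≤ ‖y‖ / (1 - ‖α‖) := by rw [le_div_iff₀ (by linarith)]; exact hv0

end Recurrence

section AllAtOnce

variable {ι κ R : Type*} [Fintype ι] [DecidableEq ι] [Fintype κ] [DecidableEq κ] [CommSemiring R]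

def allAtOnce (M : Matrix ι ι R) (B : Matrix κ κ R) : Matrix (ι × κ) (ι × κ) R :=
  1 ⊗ₖ 1 + M ⊗ₖ B

lemma one_kronecker_mul_allAtOnce {P B D : Matrix κ κ R} (h : P * B = D * P)
    (M : Matrix ι ι R) : (1 ⊗ₖ P) * allAtOnce M B = allAtOnce M D * (1 ⊗ₖ P) := by
  simp only [allAtOnce, Matrix.mul_add, Matrix.add_mul, ← mul_kronecker_mul, Matrix.one_mul,
    Matrix.mul_one, h]

lemma allAtOnce_diagonal_mulVec_apply (M : Matrix ι ι R) (d : κ → R) (v : ι × κ → R)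
    (n : ι) (i : κ) :
    (allAtOnce M (diagonal d) *ᵥ v) (n, i) = v (n, i) + d i * (M *ᵥ fun k => v (k, i)) n := by
  rw [allAtOnce, one_kronecker_one, add_mulVec, one_mulVec, Pi.add_apply]
  congr 1
  simp only [mulVec, dotProduct, Fintype.sum_prod_type, kroneckerMap_apply, diagonal_apply,
    mul_ite, mul_zero, ite_mul, zero_mul, Finset.sum_ite_eq, Finset.mem_univ, if_true,
    Finset.mul_sum]
  exact Finset.sum_congr rfl fun k _ => by ring

end AllAtOnce

section Contraction

variable {m N : ℕ} {α : ℂ} {r : Fin m → ℂ}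

lemma norm_le_of_allAtOnce_diagonal_mulVec_eq (hr : ∀ i, ‖r i‖ ≤ 1) (hα : ‖α‖ < 1)
    {v w : Fin (N + 1) × Fin m → ℂ}
    (h : allAtOnce (downShiftAlpha (N + 1) α) (diagonal r) *ᵥ v =
      (allAtOnce (downShiftAlpha (N + 1) α) (diagonal r) -
        allAtOnce (downShift (N + 1)) (diagonal r)) *ᵥ w) :
    ‖v‖ ≤ ‖α‖ / (1 - ‖α‖) * ‖w‖ := by
  have hcoef : 0 ≤ ‖α‖ / (1 - ‖α‖) := div_nonneg (norm_nonneg α) (by linarith)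
  refine (pi_norm_le_iff_of_nonneg (mul_nonneg hcoef (norm_nonneg w))).mpr fun ⟨n, i⟩ => ?_
  have hcol : (fun k => v (k, i)) + r i • (downShiftAlpha (N + 1) α *ᵥ fun k => v (k, i)) =
      Pi.single 0 (r i * (α * w (Fin.last N, i))) := by
    ext k
    have hk := congrFun h (k, i)
    simp only [sub_mulVec, Pi.sub_apply, allAtOnce_diagonal_mulVec_apply, downShiftAlpha_mulVec,
      Pi.add_apply, Pi.smul_apply, smul_eq_mul, Pi.single_apply] at hk ⊢
    split_ifs at hk ⊢ <;> linear_combination hk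
  have hrhs : ‖r i * (α * w (Fin.last N, i))‖ ≤ ‖α‖ * ‖w‖ := by
    rw [norm_mul, norm_mul]
    exact mul_le_of_le_one_left (by positivity) (hr i) |>.trans
      (mul_le_mul_of_nonneg_left (norm_le_pi_norm w _) (norm_nonneg α))
  calc ‖v (n, i)‖ ≤ ‖r i * (α * w (Fin.last N, i))‖ / (1 - ‖α‖) :=
        norm_le_of_add_smul_downShiftAlpha_mulVec (hr i) hα hcol n
    _ ≤ ‖α‖ * ‖w‖ / (1 - ‖α‖) := by gcongr
    _ = ‖α‖ / (1 - ‖α‖) * ‖w‖ := by ring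

variable {P R : Matrix (Fin m) (Fin m) ℂ}

lemma norm_one_kronecker_mulVec_le_of_allAtOnce_mulVec_eq (hr : ∀ i, ‖r i‖ ≤ 1) (hα : ‖α‖ < 1)
    (hPR : P * R = diagonal r * P) {x y : Fin (N + 1) × Fin m → ℂ}
    (h : allAtOnce (downShiftAlpha (N + 1) α) R *ᵥ x =
      (allAtOnce (downShiftAlpha (N + 1) α) R - allAtOnce (downShift (N + 1)) R) *ᵥ y) :
    ‖((1 : Matrix (Fin (N + 1)) (Fin (N + 1)) ℂ) ⊗ₖ P) *ᵥ x‖ ≤ ‖α‖ / (1 - ‖α‖) *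
      ‖((1 : Matrix (Fin (N + 1)) (Fin (N + 1)) ℂ) ⊗ₖ P) *ᵥ y‖ := by
  refine norm_le_of_allAtOnce_diagonal_mulVec_eq hr hα ?_
  rw [mulVec_mulVec, mulVec_mulVec, ← one_kronecker_mul_allAtOnce hPR, sub_mul,
    ← one_kronecker_mul_allAtOnce hPR, ← one_kronecker_mul_allAtOnce hPR, ← Matrix.mul_sub,
    ← mulVec_mulVec, h, mulVec_mulVec]

end Contraction

theorem paraDiagII_oneStep_unified_general (m Nt : ℕ) (hNt : 1 ≤ Nt)
    (α : ℝ) (hα : α ∈ Set.Ioo (0 : ℝ) 1)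
    (P : Matrix (Fin m) (Fin m) ℂ) (hP : IsUnit P)
    (r : Fin m → ℂ) (hstab : ∀ i, ‖r i‖ ≤ 1) :
    let RA := P⁻¹ * Matrix.diagonal r * P
    let Im : Matrix (Fin m) (Fin m) ℂ := 1
    let It : Matrix (Fin Nt) (Fin Nt) ℂ := 1
    let AA := It ⊗ₖ Im + downShift Nt ⊗ₖ RA
    let Pα := It ⊗ₖ Im + downShiftAlpha Nt (α : ℂ) ⊗ₖ RA
    IsUnit Pα ∧
      (∀ e : Fin Nt × Fin m → ℂ,
        ‖(It ⊗ₖ P).mulVec (((1 : Matrix (Fin Nt × Fin m) (Fin Nt × Fin m) ℂ)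
            - Pα⁻¹ * AA).mulVec e)‖ ≤ (α / (1 - α)) * ‖(It ⊗ₖ P).mulVec e‖) ∧
      (∀ (u b : Fin Nt × Fin m → ℂ) (useq : ℕ → Fin Nt × Fin m → ℂ),
        AA.mulVec u = b →
        (∀ k, Pα.mulVec (useq (k + 1)) = (Pα - AA).mulVec (useq k) + b) →
        ∀ k, ‖(It ⊗ₖ P).mulVec (useq (k + 1) - u)‖ ≤
          (α / (1 - α)) * ‖(It ⊗ₖ P).mulVec (useq k - u)‖) := by
  obtain ⟨N, rfl⟩ := Nat.exists_eq_add_of_le' hNt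
  intro RA Im It AA Pα
  have hPR : P * RA = diagonal r * P := by
    rw [← Matrix.mul_assoc, ← Matrix.mul_assoc, mul_nonsing_inv P ((isUnit_iff_isUnit_det P).mp hP),
      Matrix.one_mul]
  have hαnorm : ‖(α : ℂ)‖ = α := by rw [Complex.norm_real, Real.norm_of_nonneg hα.1.le]
  have hα1 : ‖(α : ℂ)‖ < 1 := by rw [hαnorm]; exact hα.2
  have hcontract : ∀ x y, Pα *ᵥ x = (Pα - AA) *ᵥ y →
      ‖(It ⊗ₖ P) *ᵥ x‖ ≤ α / (1 - α) * ‖(It ⊗ₖ P) *ᵥ y‖ := fun x y h => by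
    simpa only [hαnorm] using norm_one_kronecker_mulVec_le_of_allAtOnce_mulVec_eq hstab hα1 hPR h
  have hPα : IsUnit Pα := by
    have hQ : Function.Injective (It ⊗ₖ P).mulVec := by
      refine mulVec_injective_iff_isUnit.mpr ((isUnit_iff_isUnit_det _).mpr ?_)
      simpa [It, det_kronecker] using ((isUnit_iff_isUnit_det P).mp hP).pow (N + 1)
    refine mulVec_injective_iff_isUnit.mp fun x y hxy => sub_eq_zero.mp (hQ ?_)
    have h := hcontract (x - y) 0 (by rw [mulVec_sub, hxy, sub_self, mulVec_zero])
    rwa [mulVec_zero, norm_zero, mul_zero, norm_le_zero_iff, ← mulVec_zero (It ⊗ₖ P)] at h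
  refine ⟨hPα, fun e => hcontract _ _ ?_, fun u b useq hu hstep k => hcontract _ _ ?_⟩
  · rw [mulVec_mulVec, Matrix.mul_sub, Matrix.mul_one, ← Matrix.mul_assoc,
      mul_nonsing_inv _ ((isUnit_iff_isUnit_det _).mp hPα), Matrix.one_mul]
  · rw [mulVec_sub, mulVec_sub, hstep, ← hu, sub_mulVec, sub_mulVec]
    abel

/-- Unified ParaDiag-II convergence for one-step time integrators (stable in the sense
`|𝓡(Δtλᵢ)| ≤ 1`): the α-circulant approximation `P_α` of the one-step all-at-once
matrix `𝐀 = I ⊗ I + S ⊗ R_A` is invertible, the contraction estimate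
`‖(I⊗P)(I - P_α⁻¹𝐀)e‖_∞ ≤ (α/(1-α))‖(I⊗P)e‖_∞` holds for every vector `e`, and the
errors of the stationary iteration `P_α u^{k+1} = (P_α - 𝐀)u^k + b` contract by the
factor `α/(1-α)`; note `∀ e : Fin Nt × Fin m → ℂ, ‖e‖ = max-norm` by the Pi instance. -/
theorem paraDiagII_oneStep_unified (m Nt : ℕ) (hm : 1 ≤ m) (hNt : 1 ≤ Nt)
    (α : ℝ) (hα : α ∈ Set.Ioo (0 : ℝ) 1)
    (P : Matrix (Fin m) (Fin m) ℂ) (hP : IsUnit P)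
    (lam : Fin m → ℂ) (A : Matrix (Fin m) (Fin m) ℂ)
    (hA : A = P⁻¹ * Matrix.diagonal lam * P)
    (r : Fin m → ℂ) (hstab : ∀ i, ‖r i‖ ≤ 1) :
    let RA := P⁻¹ * Matrix.diagonal r * P
    let Im : Matrix (Fin m) (Fin m) ℂ := 1
    let It : Matrix (Fin Nt) (Fin Nt) ℂ := 1
    let AA := It ⊗ₖ Im + downShift Nt ⊗ₖ RA
    let Pα := It ⊗ₖ Im + downShiftAlpha Nt (α : ℂ) ⊗ₖ RA
    IsUnit Pα ∧
      (∀ e : Fin Nt × Fin m → ℂ,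
        ‖(It ⊗ₖ P).mulVec (((1 : Matrix (Fin Nt × Fin m) (Fin Nt × Fin m) ℂ)
            - Pα⁻¹ * AA).mulVec e)‖ ≤ (α / (1 - α)) * ‖(It ⊗ₖ P).mulVec e‖) ∧
      (∀ (u b : Fin Nt × Fin m → ℂ) (useq : ℕ → Fin Nt × Fin m → ℂ),
        AA.mulVec u = b →
        (∀ k, Pα.mulVec (useq (k + 1)) = (Pα - AA).mulVec (useq k) + b) →
        ∀ k, ‖(It ⊗ₖ P).mulVec (useq (k + 1) - u)‖ ≤
          (α / (1 - α)) * ‖(It ⊗ₖ P).mulVec (useq k - u)‖) :=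
  paraDiagII_oneStep_unified_general m Nt hNt α hα P hP r hstab
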